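/- arXiv:2109.07956 — 2 statements merged into one kernel-verified Lean document; each statement's English description precedes it below -/
import Mathlib

section
/- (Credibility factors of the heterogeneous INAR(1) model.) Let T ≥ 2 be an integer, p ∈ [0,1), λ > 0, ψ₀ > 0. Set m = λ/(1−p), b = λψ₀/(1−p) and D = b(T − p(T−2)) + 1 + p. Let Σ = m²ψ₀·E_T + m·Σ_{T,p}, where E_T is the T×T all-ones matrix, and let c ∈ ℝ^T with c_j = m(p^{T+1−j} + mψ₀) for j = 1,…,T. Then Σ is invertible and the credibility factors w = Σ^{−1}c are given by: w_1 = b(1−p)/D; w_j = (1−p)·w_1 for every j with 2 ≤ j ≤ T−1; and w_T = w_1 + p. Moreover, the intercept satisfies m·(1 − Σ_{j=1}^T w_j) = λ(1−p²)/((1−p)·D). -/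
/-!
The Toeplitz matrix factors as `Σ_{T,p} = Lᵀ Δ L` with `L` unit upper triangular,
`L k i = p ^ (i - k)` for `k ≤ i`, and `Δ = diag(1, 1 - p², …, 1 - p²)`; hence it is positive
definite for `|p| < 1`, and so is `Σ = m²ψ₀ E_T + m Σ_{T,p}`. The credibility factors are then
found by guessing the solution: geometric sums give `Σ_{T,p} u = (1 + p) 𝟙` for
`u = (1, 1 - p, …, 1 - p, 1)`, and the last column of `Σ_{T,p}` is `(p ^ (T - 1 - i))ᵢ`, so
`Σ (w₁ u + p e_T) = c` reduces to one scalar equation `w₁ D = b (1 - p)` for `w₁`.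
-/

open Matrix

/-- The T×T AR(1) correlation (Toeplitz) matrix with entries `p^{|i-j|}`. -/
noncomputable def sigmaMat (T : ℕ) (p : ℝ) : Matrix (Fin T) (Fin T) ℝ :=
  Matrix.of fun i j => p ^ (Int.natAbs ((i : ℤ) - (j : ℤ)))

open Finset

theorem sum_ite_val_eq {M : Type*} [AddCommMonoid M] {T : ℕ} (g : Fin T → M) {n : ℕ}
    (hn : n < T) : ∑ j : Fin T, (if (j : ℕ) = n then g j else 0) = g ⟨n, hn⟩ := by
  rw [Fintype.sum_eq_single ⟨n, hn⟩ fun j hj => if_neg (Fin.val_ne_of_ne hj), if_pos rfl]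

namespace sigmaMat

variable (T : ℕ) (p : ℝ)

noncomputable def ldlFactor : Matrix (Fin T) (Fin T) ℝ :=
  of fun k i => if k ≤ i then p ^ ((i : ℕ) - k) else 0

noncomputable def ldlDiag : Fin T → ℝ :=
  fun k => if (k : ℕ) = 0 then 1 else 1 - p ^ 2

theorem sum_ldlDiag_mul_pow (j : ℕ) :
    ∑ k ∈ range (j + 1), (if k = 0 then (1 : ℝ) else 1 - p ^ 2) * (p ^ 2) ^ (j - k) = 1 := by
  induction j with
  | zero => simp
  | succ j ih =>
    have hshift (k : ℕ) (hk : k ∈ range (j + 1)) :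
        (p ^ 2) ^ (j + 1 - k) = p ^ 2 * (p ^ 2) ^ (j - k) := by
      rw [Nat.sub_add_comm (mem_range_succ_iff.mp hk), pow_succ']
    rw [sum_range_succ, sum_congr rfl fun k hk => by rw [hshift k hk, mul_left_comm],
      ← mul_sum, ih, Nat.sub_self, if_neg j.succ_ne_zero]
    ring

variable {T p}

theorem ldl_apply_of_le {i j : Fin T} (hji : j ≤ i) :
    ∑ k, ldlFactor T p k i * ldlDiag T p k * ldlFactor T p k j = p ^ ((i : ℕ) - j) := by
  let f : ℕ → ℝ := fun k => (if k ≤ i then p ^ ((i : ℕ) - k) else 0) *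
    (if k = 0 then 1 else 1 - p ^ 2) * if k ≤ j then p ^ ((j : ℕ) - k) else 0
  have hsub : range (j + 1) ⊆ range T := range_subset_range.mpr j.isLt
  calc ∑ k, ldlFactor T p k i * ldlDiag T p k * ldlFactor T p k j
      = ∑ k ∈ range T, f k := Fin.sum_univ_eq_sum_range f T
    _ = ∑ k ∈ range (j + 1), f k :=
        (sum_subset hsub fun k _ hk => by simp [f, mem_range_succ_iff.not.mp hk]).symm
    _ = ∑ k ∈ range (j + 1), p ^ ((i : ℕ) - j) *
          ((if k = 0 then (1 : ℝ) else 1 - p ^ 2) * (p ^ 2) ^ ((j : ℕ) - k)) := by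
        refine sum_congr rfl fun k hk => ?_
        have hkj : k ≤ j := mem_range_succ_iff.mp hk
        simp only [f, if_pos hkj, if_pos (hkj.trans hji)]
        have hj : (j : ℕ) ≤ i := hji
        rw [show (i : ℕ) - k = (i - j) + (j - k) by omega, pow_add]
        ring
    _ = p ^ ((i : ℕ) - j) := by rw [← mul_sum, sum_ldlDiag_mul_pow, mul_one]

theorem eq_ldl : sigmaMat T p = (ldlFactor T p)ᵀ * diagonal (ldlDiag T p) * ldlFactor T p := by
  ext i j
  rw [mul_apply]
  simp only [mul_diagonal, transpose_apply]
  rcases le_total j i with h | h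
  · rw [ldl_apply_of_le h, sigmaMat, of_apply]
    congr 1
    omega
  · have hswap : ∀ k, ldlFactor T p k i * ldlDiag T p k * ldlFactor T p k j =
        ldlFactor T p k j * ldlDiag T p k * ldlFactor T p k i := fun k => by ring
    rw [sum_congr rfl fun k _ => hswap k, ldl_apply_of_le h, sigmaMat, of_apply]
    congr 1
    omega

theorem ldlFactor_mulVec_injective : Function.Injective (ldlFactor T p).mulVec := by
  have htri : (ldlFactor T p).IsUpperTriangular := fun i j hji => by
    simp [ldlFactor, not_le.mpr (show j < i from hji)]
  rw [mulVec_injective_iff_isUnit, isUnit_iff_isUnit_det, det_of_isUpperTriangular htri]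
  simp [ldlFactor]

end sigmaMat

section

variable {T : ℕ} {p : ℝ}

theorem sigmaMat_posDef (hp : |p| < 1) : (sigmaMat T p).PosDef := by
  have hd : (diagonal (sigmaMat.ldlDiag T p)).PosDef := posDef_diagonal_iff.mpr fun k => by
    have := (sq_lt_one_iff_abs_lt_one p).mpr hp
    unfold sigmaMat.ldlDiag
    split_ifs <;> linarith
  rw [sigmaMat.eq_ldl]
  simpa using hd.conjTranspose_mul_mul_same sigmaMat.ldlFactor_mulVec_injective

theorem one_sub_mul_sum_sigmaMat_row (i : Fin T) :
    (1 - p) * ∑ j, sigmaMat T p i j = 1 + p - p ^ ((i : ℕ) + 1) - p ^ (T - i) := by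
  obtain ⟨n, hn⟩ := i
  simp only [sigmaMat, of_apply]
  rw [Fin.sum_univ_eq_sum_range (fun j => p ^ ((n : ℤ) - j).natAbs) T,
    ← sum_range_add_sum_Ico _ (show n + 1 ≤ T by omega)]
  have hbelow :
      ∑ j ∈ range (n + 1), p ^ ((n : ℤ) - j).natAbs = ∑ r ∈ range (n + 1), p ^ r := by
    rw [← sum_range_reflect]
    refine sum_congr rfl fun j hj => ?_
    have := mem_range.mp hj
    congr 1
    omega
  have habove : ∑ j ∈ Ico (n + 1) T, p ^ ((n : ℤ) - j).natAbs =
      p * ∑ r ∈ range (T - (n + 1)), p ^ r := by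
    rw [sum_Ico_eq_sum_range, mul_sum]
    refine sum_congr rfl fun r _ => ?_
    rw [← pow_succ']
    congr 1
    omega
  have hpow : p ^ (T - n) = p * p ^ (T - (n + 1)) := by
    rw [← pow_succ']
    congr 1
    omega
  rw [hbelow, habove, hpow]
  linear_combination -geom_sum_mul p (n + 1) - p * geom_sum_mul p (T - (n + 1))

theorem sigmaMat_apply_last_mul (i : Fin T) :
    sigmaMat T p i ⟨T - 1, Nat.sub_one_lt_of_lt i.pos⟩ * p = p ^ (T - i) := by
  rw [sigmaMat, of_apply, ← pow_succ]
  congr 1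
  dsimp only
  omega

variable (T p) in
/-- `(1, 1 - p, …, 1 - p, 1)` when `T ≥ 2`. -/
noncomputable def edgeVec : Fin T → ℝ :=
  fun j => 1 - p + (if (j : ℕ) = 0 then p else 0) + (if (j : ℕ) = T - 1 then p else 0)

theorem sigmaMat_mulVec_edgeVec : sigmaMat T p *ᵥ edgeVec T p = fun _ => 1 + p := by
  funext i
  have hT : 0 < T := i.pos
  simp only [mulVec, dotProduct, edgeVec, mul_add, sum_add_distrib, ← sum_mul, mul_ite, mul_zero,
    sum_ite_val_eq _ hT, sum_ite_val_eq _ (Nat.sub_one_lt_of_lt hT)]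
  have hfirst : sigmaMat T p i ⟨0, hT⟩ = p ^ (i : ℕ) := by simp [sigmaMat]
  rw [hfirst, sigmaMat_apply_last_mul]
  linear_combination one_sub_mul_sum_sigmaMat_row (p := p) i

theorem sum_edgeVec (hT : 0 < T) : ∑ j, edgeVec T p j = T - p * (T - 2) := by
  simp only [edgeVec, sum_add_distrib, sum_ite_val_eq _ hT,
    sum_ite_val_eq _ (Nat.sub_one_lt_of_lt hT), sum_const, card_univ, Fintype.card_fin,
    nsmul_eq_mul]
  ring

variable (T p) in
/-- `(w₁, (1 - p) w₁, …, (1 - p) w₁, w₁ + p)` when `T ≥ 2`. -/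
noncomputable def credibilityWeights (w₁ : ℝ) : Fin T → ℝ :=
  fun j => w₁ * edgeVec T p j + if (j : ℕ) = T - 1 then p else 0

theorem sigmaMat_mulVec_credibilityWeights (w₁ : ℝ) (i : Fin T) :
    (sigmaMat T p *ᵥ credibilityWeights T p w₁) i = w₁ * (1 + p) + p ^ (T - i) := by
  have hedge := congrFun (sigmaMat_mulVec_edgeVec (T := T) (p := p)) i
  simp only [mulVec, dotProduct] at hedge ⊢
  simp only [credibilityWeights, mul_add, sum_add_distrib, mul_left_comm _ w₁, ← mul_sum, hedge,
    mul_ite, mul_zero, sum_ite_val_eq _ (Nat.sub_one_lt_of_lt i.pos), sigmaMat_apply_last_mul]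

theorem sum_credibilityWeights (hT : 0 < T) (w₁ : ℝ) :
    ∑ j, credibilityWeights T p w₁ j = w₁ * (T - p * (T - 2)) + p := by
  simp only [credibilityWeights, sum_add_distrib, ← mul_sum, sum_edgeVec hT,
    sum_ite_val_eq _ (Nat.sub_one_lt_of_lt hT)]

variable (T p) in
noncomputable def inarCov (m ψ₀ : ℝ) : Matrix (Fin T) (Fin T) ℝ :=
  (m ^ 2 * ψ₀) • of (fun _ _ : Fin T => (1 : ℝ)) + m • sigmaMat T p

theorem inarCov_mulVec (m ψ₀ : ℝ) (v : Fin T → ℝ) (i : Fin T) :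
    (inarCov T p m ψ₀ *ᵥ v) i = m ^ 2 * ψ₀ * ∑ j, v j + m * (sigmaMat T p *ᵥ v) i := by
  simp only [inarCov, mulVec, dotProduct, Matrix.add_apply, Matrix.smul_apply, of_apply,
    smul_eq_mul, mul_one, add_mul, sum_add_distrib, mul_assoc, ← mul_sum]

theorem inarCov_mulVec_credibilityWeights {m ψ₀ : ℝ}
    (hD : m * ψ₀ * (T - p * (T - 2)) + 1 + p ≠ 0) :
    inarCov T p m ψ₀ *ᵥ
        credibilityWeights T p (m * ψ₀ * (1 - p) / (m * ψ₀ * (T - p * (T - 2)) + 1 + p)) =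
      fun j : Fin T => m * (p ^ (T - (j : ℕ)) + m * ψ₀) := by
  funext j
  rw [inarCov_mulVec, sum_credibilityWeights j.pos, sigmaMat_mulVec_credibilityWeights]
  field_simp
  ring

theorem inarCov_posDef {m ψ₀ : ℝ} (hm : 0 < m) (hψ₀ : 0 ≤ ψ₀) (hp : |p| < 1) :
    (inarCov T p m ψ₀).PosDef := by
  have hones : (of fun _ _ : Fin T => (1 : ℝ)).PosSemidef := by
    simpa [vecMulVec] using posSemidef_vecMulVec_self_star (fun _ : Fin T => (1 : ℝ))
  exact PosDef.posSemidef_add (hones.smul (by positivity)) ((sigmaMat_posDef hp).smul hm)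

theorem inarCov_inv_mulVec {m ψ₀ : ℝ} (hm : 0 < m) (hψ₀ : 0 ≤ ψ₀) (hp : |p| < 1)
    (hD : m * ψ₀ * (T - p * (T - 2)) + 1 + p ≠ 0) :
    (inarCov T p m ψ₀)⁻¹ *ᵥ (fun j : Fin T => m * (p ^ (T - (j : ℕ)) + m * ψ₀)) =
      credibilityWeights T p (m * ψ₀ * (1 - p) / (m * ψ₀ * (T - p * (T - 2)) + 1 + p)) := by
  have := (inarCov_posDef (T := T) hm hψ₀ hp).isUnit.invertible
  exact inv_mulVec_eq_vec (inarCov_mulVec_credibilityWeights hD).symm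

end

/-- credibility factors of the heterogeneous INAR(1) model.
With `m = λ/(1−p)`, `b = λψ₀/(1−p)`, `D = b(T − p(T−2)) + 1 + p`,
`Σ = m²ψ₀·E_T + m·Σ_{T,p}` and `c_j = m(p^{T+1−j} + mψ₀)`, the matrix `Σ` is
invertible and the credibility factors `w = Σ⁻¹c` satisfy `w_1 = b(1−p)/D`,
`w_j = (1−p)·w_1` for `2 ≤ j ≤ T−1`, `w_T = w_1 + p`, and the intercept
satisfies `m·(1 − ∑_{j=1}^T w_j) = λ(1−p²)/((1−p)·D)`. -/
theorem stmt14 (T : ℕ) (hT : 2 ≤ T) (p : ℝ) (hp1 : 0 ≤ p) (hp2 : p < 1)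
    (lam ψ₀ : ℝ) (hlam : 0 < lam) (hψ₀ : 0 < ψ₀) :
    IsUnit (((lam / (1 - p)) ^ 2 * ψ₀) • Matrix.of (fun _ _ : Fin T => (1 : ℝ)) +
      (lam / (1 - p)) • sigmaMat T p) ∧
    (((lam / (1 - p)) ^ 2 * ψ₀) • Matrix.of (fun _ _ : Fin T => (1 : ℝ)) +
        (lam / (1 - p)) • sigmaMat T p)⁻¹.mulVec
        (fun j : Fin T =>
          (lam / (1 - p)) * (p ^ (T - (j : ℕ)) + (lam / (1 - p)) * ψ₀))
        ⟨0, by omega⟩ =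
      (lam * ψ₀ / (1 - p)) * (1 - p) /
        ((lam * ψ₀ / (1 - p)) * ((T : ℝ) - p * ((T : ℝ) - 2)) + 1 + p) ∧
    (∀ j : Fin T, 1 ≤ (j : ℕ) → (j : ℕ) ≤ T - 2 →
      (((lam / (1 - p)) ^ 2 * ψ₀) • Matrix.of (fun _ _ : Fin T => (1 : ℝ)) +
          (lam / (1 - p)) • sigmaMat T p)⁻¹.mulVec
          (fun j : Fin T =>
            (lam / (1 - p)) * (p ^ (T - (j : ℕ)) + (lam / (1 - p)) * ψ₀)) j =
        (1 - p) *
          (((lam / (1 - p)) ^ 2 * ψ₀) • Matrix.of (fun _ _ : Fin T => (1 : ℝ)) +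
            (lam / (1 - p)) • sigmaMat T p)⁻¹.mulVec
            (fun j : Fin T =>
              (lam / (1 - p)) * (p ^ (T - (j : ℕ)) + (lam / (1 - p)) * ψ₀))
            ⟨0, by omega⟩) ∧
    (((lam / (1 - p)) ^ 2 * ψ₀) • Matrix.of (fun _ _ : Fin T => (1 : ℝ)) +
        (lam / (1 - p)) • sigmaMat T p)⁻¹.mulVec
        (fun j : Fin T =>
          (lam / (1 - p)) * (p ^ (T - (j : ℕ)) + (lam / (1 - p)) * ψ₀))
        ⟨T - 1, by omega⟩ =
      (((lam / (1 - p)) ^ 2 * ψ₀) • Matrix.of (fun _ _ : Fin T => (1 : ℝ)) +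
          (lam / (1 - p)) • sigmaMat T p)⁻¹.mulVec
          (fun j : Fin T =>
            (lam / (1 - p)) * (p ^ (T - (j : ℕ)) + (lam / (1 - p)) * ψ₀))
          ⟨0, by omega⟩ + p ∧
    (lam / (1 - p)) *
        (1 - ∑ j : Fin T,
          (((lam / (1 - p)) ^ 2 * ψ₀) • Matrix.of (fun _ _ : Fin T => (1 : ℝ)) +
            (lam / (1 - p)) • sigmaMat T p)⁻¹.mulVec
            (fun j : Fin T =>
              (lam / (1 - p)) * (p ^ (T - (j : ℕ)) + (lam / (1 - p)) * ψ₀)) j) =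
      lam * (1 - p ^ 2) /
        ((1 - p) *
          ((lam * ψ₀ / (1 - p)) * ((T : ℝ) - p * ((T : ℝ) - 2)) + 1 + p)) := by
  have hp : |p| < 1 := abs_lt.mpr ⟨by linarith, hp2⟩
  have hm : 0 < lam / (1 - p) := div_pos hlam (by linarith)
  rw [show lam * ψ₀ / (1 - p) = lam / (1 - p) * ψ₀ by ring]
  set m := lam / (1 - p)
  have hK : 0 < (T : ℝ) - p * (T - 2) := by
    have : (2 : ℝ) ≤ T := by exact_mod_cast hT
    nlinarith
  have hD : 0 < m * ψ₀ * (T - p * (T - 2)) + 1 + p := by positivity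
  have hA : IsUnit (inarCov T p m ψ₀) := (inarCov_posDef hm hψ₀.le hp).isUnit
  have hsol := inarCov_inv_mulVec (T := T) hm hψ₀.le hp hD.ne'
  unfold inarCov at hA hsol
  rw [hsol]
  refine ⟨hA, ?_, fun j hj1 hj2 => ?_, ?_, ?_⟩
  · simp only [credibilityWeights, edgeVec, if_pos, if_neg (show 0 ≠ T - 1 by omega)]
    ring
  · simp only [credibilityWeights, edgeVec, if_neg (show (j : ℕ) ≠ 0 by omega),
      if_neg (show (j : ℕ) ≠ T - 1 by omega), if_neg (show 0 ≠ T - 1 by omega), if_pos]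
    ring
  · simp only [credibilityWeights, edgeVec, if_neg (show T - 1 ≠ 0 by omega),
      if_neg (show 0 ≠ T - 1 by omega), if_pos]
    ring
  · rw [sum_credibilityWeights (by omega)]
    field_simp
    ring
end

section
/- (Failure of the ordering of credibility factors in the heterogeneous INAR(1) model.) Let T ≥ 3 be an integer, p ∈ (0,1), λ > 0, ψ₀ > 0, and set m = λ/(1−p). Let Σ = m²ψ₀·E_T + m·Σ_{T,p} and c_j = m(p^{T+1−j} + mψ₀) for j = 1,…,T. Then the credibility factors w = Σ^{−1}c satisfy w_1 > w_j for every j with 2 ≤ j ≤ T−1, and w_T > w_1 > 0. In particular, the credibility factors are not monotonically nondecreasing in j, even though the covariance c_j is strictly increasing in j. -/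
/-!
`Σ_{T,p} = Uᵀ D U` with `U` unit upper triangular, `U_{kj} = p^{j-k}`, and
`D = diag(1, 1-p², …, 1-p²)`, so for `|p| < 1` the matrix `Σ_{T,p}`, and with it the covariance
matrix `m²ψ₀ E_T + m Σ_{T,p}`, is positive definite. The last column of `Σ_{T,p}` is
`(p^{T-j})_j`, and `Σ_{T,p} u = 1` for `u = ((1-p)·1 + p e_1 + p e_T)/(1+p)`; hence
`w = p e_T + κ u` solves `Σ w = c` as soon as `κ (1 + mψ₀ ∑ u) = mψ₀ (1-p)`, which has a positive
solution `κ`. Reading off coordinates, `w_1 = κ/(1+p)`, `w_j = κ(1-p)/(1+p)` for `1 < j < T` and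
`w_T = p + κ/(1+p)`.
-/

open Matrix

open Finset

namespace INAR

variable {T : ℕ} (p : ℝ)

lemma sigmaMat_apply_of_le {i j : Fin T} (h : i ≤ j) : sigmaMat T p i j = p ^ ((j : ℕ) - i) := by
  simp only [sigmaMat, of_apply]
  congr 1
  omega

lemma isSymm_sigmaMat : (sigmaMat T p).IsSymm := by
  ext i j
  simp only [sigmaMat, transpose_apply, of_apply]
  congr 1
  omega

noncomputable def sigmaFactor (T : ℕ) (p : ℝ) : Matrix (Fin T) (Fin T) ℝ :=
  of fun k j => if (k : ℕ) ≤ j then p ^ ((j : ℕ) - k) else 0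

/-- The innovation variances of a stationary AR(1) process with unit marginal variance. -/
noncomputable def sigmaPivots (T : ℕ) (p : ℝ) : Fin T → ℝ :=
  fun k => if (k : ℕ) = 0 then 1 else 1 - p ^ 2

lemma sum_range_pivot_mul_pow (i n : ℕ) :
    ∑ k ∈ range (i + 1), (if k = 0 then 1 else 1 - p ^ 2) * (p ^ (i - k) * p ^ (i + n - k)) =
      p ^ n := by
  induction i with
  | zero => simp
  | succ i ih =>
    have hshift : ∀ k ∈ range (i + 1),
        (if k = 0 then 1 else 1 - p ^ 2) * (p ^ (i + 1 - k) * p ^ (i + 1 + n - k)) =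
          p ^ 2 * ((if k = 0 then 1 else 1 - p ^ 2) * (p ^ (i - k) * p ^ (i + n - k))) := by
      intro k hk
      rw [mem_range] at hk
      rw [show i + 1 - k = (i - k) + 1 by omega, show i + 1 + n - k = (i + n - k) + 1 by omega]
      ring
    rw [sum_range_succ, sum_congr rfl hshift, ← mul_sum, ih, if_neg (by omega)]
    simp only [Nat.sub_self, pow_zero, show i + 1 + n - (i + 1) = n by omega]
    ring

lemma sigmaMat_eq_transpose_mul_diagonal_mul :
    sigmaMat T p = (sigmaFactor T p)ᵀ * diagonal (sigmaPivots T p) * sigmaFactor T p := by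
  have hsymm : ((sigmaFactor T p)ᵀ * diagonal (sigmaPivots T p) * sigmaFactor T p).IsSymm := by
    simp [IsSymm, transpose_mul, Matrix.mul_assoc]
  have hle : ∀ i j : Fin T, i ≤ j → sigmaMat T p i j =
      ((sigmaFactor T p)ᵀ * diagonal (sigmaPivots T p) * sigmaFactor T p) i j := by
    intro i j hij
    obtain ⟨n, hn⟩ : ∃ n, (j : ℕ) = i + n := ⟨j - i, by omega⟩
    have hrange : range T = range ((i + 1) + (T - (i + 1))) := by congr 1; omega
    rw [sigmaMat_apply_of_le p hij, mul_apply, show (j : ℕ) - i = n by omega,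
      ← sum_range_pivot_mul_pow p i n]
    simp only [mul_diagonal, transpose_apply, sigmaFactor, sigmaPivots, of_apply]
    symm
    rw [Fin.sum_univ_eq_sum_range (fun k => (if k ≤ (i : ℕ) then p ^ ((i : ℕ) - k) else 0) *
      (if k = 0 then 1 else 1 - p ^ 2) * (if k ≤ (j : ℕ) then p ^ ((j : ℕ) - k) else 0)) T,
      hrange, sum_range_add, hn]
    have htail : ∀ x ∈ range (T - (i + 1)),
        (if (i : ℕ) + 1 + x ≤ i then p ^ ((i : ℕ) - (i + 1 + x)) else 0) *
          (if (i : ℕ) + 1 + x = 0 then 1 else 1 - p ^ 2) *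
          (if (i : ℕ) + 1 + x ≤ i + n then p ^ ((i : ℕ) + n - (i + 1 + x)) else 0) = 0 := by
      intro x _
      rw [if_neg (by omega), zero_mul, zero_mul]
    rw [sum_eq_zero htail, add_zero]
    refine sum_congr rfl fun k hk => ?_
    rw [mem_range] at hk
    rw [if_pos (show k ≤ (i : ℕ) by omega), if_pos (show k ≤ (i : ℕ) + n by omega)]
    ring
  ext i j
  rcases le_total i j with h | h
  · exact hle i j h
  · rw [← (isSymm_sigmaMat p).apply, ← hsymm.apply]
    exact hle j i h

lemma det_sigmaFactor : (sigmaFactor T p).det = 1 := by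
  rw [det_of_isUpperTriangular]
  · simp [sigmaFactor]
  · intro i j hij
    simp only [sigmaFactor, of_apply, ite_eq_right_iff]
    intro h
    exact absurd hij (not_lt.2 h)

lemma posDef_sigmaMat (hp : |p| < 1) : (sigmaMat T p).PosDef := by
  have hp2 : p ^ 2 < 1 := (sq_lt_one_iff_abs_lt_one p).2 hp
  rw [sigmaMat_eq_transpose_mul_diagonal_mul, ← conjTranspose_eq_transpose_of_trivial]
  refine (PosDef.diagonal fun k => ?_).conjTranspose_mul_mul_same ?_
  · simp only [sigmaPivots]
    split_ifs <;> linarith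
  · rw [mulVec_injective_iff_isUnit, isUnit_iff_isUnit_det, det_sigmaFactor]
    exact isUnit_one

lemma sum_sigmaMat_row_mul_one_sub (i : Fin T) :
    (∑ j, sigmaMat T p i j) * (1 - p) = 1 + p - p ^ ((i : ℕ) + 1) - p ^ (T - i) := by
  have hrange : range T = range (i + (T - i)) := by congr 1; omega
  have hleft : ∀ k ∈ range (i : ℕ), p ^ Int.natAbs ((i : ℤ) - ((i - 1 - k : ℕ) : ℤ)) =
      p * p ^ k := by
    intro k hk
    rw [mem_range] at hk
    rw [← pow_succ']
    congr 1
    omega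
  have hright : ∀ k ∈ range (T - i), p ^ Int.natAbs ((i : ℤ) - ((i + k : ℕ) : ℤ)) = p ^ k := by
    intro k _
    congr 1
    omega
  simp only [sigmaMat, of_apply]
  rw [Fin.sum_univ_eq_sum_range (fun k => p ^ Int.natAbs ((i : ℤ) - (k : ℤ))), hrange,
    sum_range_add, ← sum_range_reflect, sum_congr rfl hleft, sum_congr rfl hright, ← mul_sum]
  linear_combination -p * geom_sum_mul p i - geom_sum_mul p (T - i)

section Ones

variable (n : ℕ)

/-- `Σ_{n+1,p}⁻¹ 1`. -/
noncomputable def sigmaMatInvOnes : Fin (n + 1) → ℝ :=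
  (1 + p)⁻¹ • ((1 - p) • 1 + Pi.single 0 p + Pi.single (Fin.last n) p)

lemma sigmaMat_mulVec_single_last (i : Fin (n + 1)) :
    (sigmaMat (n + 1) p *ᵥ Pi.single (Fin.last n) p) i = p ^ (n + 1 - i) := by
  rw [mulVec_single, Pi.smul_apply, col_apply, op_smul_eq_mul,
    sigmaMat_apply_of_le p (Fin.le_last i), Fin.val_last, show n + 1 - i = (n - i) + 1 by omega,
    pow_succ]

lemma sigmaMat_mulVec_sigmaMatInvOnes (hp : 1 + p ≠ 0) :
    sigmaMat (n + 1) p *ᵥ sigmaMatInvOnes p n = 1 := by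
  ext i
  have hrow := sum_sigmaMat_row_mul_one_sub p i
  have hlast := sigmaMat_mulVec_single_last p n i
  have hfirst : sigmaMat (n + 1) p i 0 = p ^ (i : ℕ) := by
    rw [← (isSymm_sigmaMat p).apply, sigmaMat_apply_of_le p (Fin.zero_le i), Fin.val_zero,
      Nat.sub_zero]
  have hones : (sigmaMat (n + 1) p *ᵥ 1) i = ∑ j, sigmaMat (n + 1) p i j := by
    simp [mulVec, dotProduct]
  simp only [sigmaMatInvOnes, mulVec_smul, mulVec_add, Pi.smul_apply, Pi.add_apply,
    hones, mulVec_single, col_apply, op_smul_eq_mul, smul_eq_mul, hfirst, Pi.one_apply] at hlast ⊢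
  field_simp
  linear_combination hrow + hlast

lemma sum_sigmaMatInvOnes :
    ∑ j, sigmaMatInvOnes p n j = ((n + 1) * (1 - p) + 2 * p) / (1 + p) := by
  simp only [sigmaMatInvOnes, Pi.smul_apply, Pi.add_apply, Pi.one_apply, smul_eq_mul, mul_one,
    ← mul_sum, sum_add_distrib, sum_pi_single', mem_univ, if_true, sum_const, card_univ,
    Fintype.card_fin, nsmul_eq_mul]
  push_cast
  field_simp
  ring

end Ones

section Credibility

variable (n : ℕ) (m ψ₀ : ℝ)

noncomputable def credibilityFactors (κ : ℝ) : Fin (n + 1) → ℝ :=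
  Pi.single (Fin.last n) p + κ • sigmaMatInvOnes p n

lemma credibilityFactors_zero (hn : 0 < n) (κ : ℝ) :
    credibilityFactors p n κ 0 = κ * (1 + p)⁻¹ := by
  have h : (0 : Fin (n + 1)) ≠ Fin.last n := by simp [Fin.ext_iff]; omega
  simp only [credibilityFactors, sigmaMatInvOnes, Pi.add_apply, Pi.smul_apply, Pi.one_apply,
    smul_eq_mul, Pi.single_eq_same, Pi.single_eq_of_ne h]
  ring

lemma credibilityFactors_last (hn : 0 < n) (κ : ℝ) :
    credibilityFactors p n κ (Fin.last n) = p + κ * (1 + p)⁻¹ := by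
  have h : Fin.last n ≠ 0 := by simp [Fin.ext_iff]; omega
  simp only [credibilityFactors, sigmaMatInvOnes, Pi.add_apply, Pi.smul_apply, Pi.one_apply,
    smul_eq_mul, Pi.single_eq_same, Pi.single_eq_of_ne h]
  ring

lemma credibilityFactors_of_ne {j : Fin (n + 1)} (h0 : j ≠ 0) (hlast : j ≠ Fin.last n) (κ : ℝ) :
    credibilityFactors p n κ j = κ * ((1 + p)⁻¹ * (1 - p)) := by
  simp [credibilityFactors, sigmaMatInvOnes, h0, hlast]

lemma covMat_mulVec_credibilityFactors (hp : 1 + p ≠ 0) {κ : ℝ}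
    (hκ : κ * (1 + m * ψ₀ * ∑ j, sigmaMatInvOnes p n j) = m * ψ₀ * (1 - p)) :
    ((m ^ 2 * ψ₀) • of (fun _ _ : Fin (n + 1) => (1 : ℝ)) + m • sigmaMat (n + 1) p) *ᵥ
        credibilityFactors p n κ = fun j : Fin (n + 1) => m * (p ^ (n + 1 - (j : ℕ)) + m * ψ₀) := by
  have hones : of (fun _ _ : Fin (n + 1) => (1 : ℝ)) *ᵥ credibilityFactors p n κ =
      fun _ => p + κ * ∑ j, sigmaMatInvOnes p n j := by
    ext i
    simp [mulVec, dotProduct, credibilityFactors, sum_add_distrib, mul_sum]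
  have hsigma : sigmaMat (n + 1) p *ᵥ credibilityFactors p n κ =
      fun i : Fin (n + 1) => p ^ (n + 1 - (i : ℕ)) + κ := by
    ext i
    rw [credibilityFactors, mulVec_add, mulVec_smul, sigmaMat_mulVec_sigmaMatInvOnes p n hp,
      Pi.add_apply, sigmaMat_mulVec_single_last]
    simp
  ext i
  rw [add_mulVec, smul_mulVec, smul_mulVec, hones, hsigma]
  simp only [Pi.add_apply, Pi.smul_apply, smul_eq_mul]
  linear_combination m * hκ

lemma posDef_covMat (hp : |p| < 1) (hm : 0 < m) (hψ₀ : 0 ≤ ψ₀) :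
    ((m ^ 2 * ψ₀) • of (fun _ _ : Fin (n + 1) => (1 : ℝ)) + m • sigmaMat (n + 1) p).PosDef := by
  have hones : of (fun _ _ : Fin (n + 1) => (1 : ℝ)) = vecMulVec 1 (star 1) := by
    ext i j
    simp [vecMulVec_apply]
  rw [hones]
  exact PosDef.posSemidef_add ((posSemidef_vecMulVec_self_star 1).smul (by positivity))
    ((posDef_sigmaMat p hp).smul hm)

lemma exists_pos_inv_covMat_mulVec_eq (hp : |p| < 1) (hm : 0 < m) (hψ₀ : 0 < ψ₀) :
    ∃ κ > 0, ((m ^ 2 * ψ₀) • of (fun _ _ : Fin (n + 1) => (1 : ℝ)) + m • sigmaMat (n + 1) p)⁻¹ *ᵥ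
        (fun j : Fin (n + 1) => m * (p ^ (n + 1 - (j : ℕ)) + m * ψ₀)) =
      credibilityFactors p n κ := by
  obtain ⟨hp1, hp2⟩ := abs_lt.1 hp
  have hS : 0 < ∑ j, sigmaMatInvOnes p n j := by
    rw [sum_sigmaMatInvOnes]
    apply div_pos _ (by linarith)
    nlinarith
  have hden : 0 < 1 + m * ψ₀ * ∑ j, sigmaMatInvOnes p n j := by positivity
  refine ⟨m * ψ₀ * (1 - p) / (1 + m * ψ₀ * ∑ j, sigmaMatInvOnes p n j),
    div_pos (mul_pos (mul_pos hm hψ₀) (by linarith)) hden, ?_⟩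
  have := (posDef_covMat p n m ψ₀ hp hm hψ₀.le).isUnit.invertible
  exact inv_mulVec_eq_vec (covMat_mulVec_credibilityFactors p n m ψ₀ (by linarith)
    (div_mul_cancel₀ _ hden.ne')).symm

end Credibility

end INAR

open INAR

/-- failure of the ordering of credibility factors in the
heterogeneous INAR(1) model.  With `m = λ/(1−p)`, `Σ = m²ψ₀·E_T + m·Σ_{T,p}`
and `c_j = m(p^{T+1−j} + mψ₀)`, the credibility factors `w = Σ⁻¹c` satisfy
`w_1 > w_j` for `2 ≤ j ≤ T−1` and `w_T > w_1 > 0`; in particular `w` is not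
monotonically nondecreasing, even though `c_j` is strictly increasing in `j`. -/
theorem stmt15 (T : ℕ) (hT : 3 ≤ T) (p : ℝ) (hp1 : 0 < p) (hp2 : p < 1)
    (lam ψ₀ : ℝ) (hlam : 0 < lam) (hψ₀ : 0 < ψ₀) :
    (∀ j : Fin T, 1 ≤ (j : ℕ) → (j : ℕ) ≤ T - 2 →
      (((lam / (1 - p)) ^ 2 * ψ₀) • Matrix.of (fun _ _ : Fin T => (1 : ℝ)) +
          (lam / (1 - p)) • sigmaMat T p)⁻¹.mulVec
          (fun j : Fin T =>
            (lam / (1 - p)) * (p ^ (T - (j : ℕ)) + (lam / (1 - p)) * ψ₀)) j <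
        (((lam / (1 - p)) ^ 2 * ψ₀) • Matrix.of (fun _ _ : Fin T => (1 : ℝ)) +
            (lam / (1 - p)) • sigmaMat T p)⁻¹.mulVec
            (fun j : Fin T =>
              (lam / (1 - p)) * (p ^ (T - (j : ℕ)) + (lam / (1 - p)) * ψ₀))
            ⟨0, by omega⟩) ∧
    (((lam / (1 - p)) ^ 2 * ψ₀) • Matrix.of (fun _ _ : Fin T => (1 : ℝ)) +
        (lam / (1 - p)) • sigmaMat T p)⁻¹.mulVec
        (fun j : Fin T =>
          (lam / (1 - p)) * (p ^ (T - (j : ℕ)) + (lam / (1 - p)) * ψ₀))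
        ⟨0, by omega⟩ <
      (((lam / (1 - p)) ^ 2 * ψ₀) • Matrix.of (fun _ _ : Fin T => (1 : ℝ)) +
          (lam / (1 - p)) • sigmaMat T p)⁻¹.mulVec
          (fun j : Fin T =>
            (lam / (1 - p)) * (p ^ (T - (j : ℕ)) + (lam / (1 - p)) * ψ₀))
          ⟨T - 1, by omega⟩ ∧
    0 < (((lam / (1 - p)) ^ 2 * ψ₀) • Matrix.of (fun _ _ : Fin T => (1 : ℝ)) +
          (lam / (1 - p)) • sigmaMat T p)⁻¹.mulVec
          (fun j : Fin T =>
            (lam / (1 - p)) * (p ^ (T - (j : ℕ)) + (lam / (1 - p)) * ψ₀))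
          ⟨0, by omega⟩ ∧
    ¬ (∀ i j : Fin T, i ≤ j →
        (((lam / (1 - p)) ^ 2 * ψ₀) • Matrix.of (fun _ _ : Fin T => (1 : ℝ)) +
            (lam / (1 - p)) • sigmaMat T p)⁻¹.mulVec
            (fun j : Fin T =>
              (lam / (1 - p)) * (p ^ (T - (j : ℕ)) + (lam / (1 - p)) * ψ₀)) i ≤
          (((lam / (1 - p)) ^ 2 * ψ₀) • Matrix.of (fun _ _ : Fin T => (1 : ℝ)) +
              (lam / (1 - p)) • sigmaMat T p)⁻¹.mulVec
              (fun j : Fin T =>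
                (lam / (1 - p)) * (p ^ (T - (j : ℕ)) + (lam / (1 - p)) * ψ₀)) j) ∧
    (∀ i j : Fin T, i < j →
      (lam / (1 - p)) * (p ^ (T - (i : ℕ)) + (lam / (1 - p)) * ψ₀) <
        (lam / (1 - p)) * (p ^ (T - (j : ℕ)) + (lam / (1 - p)) * ψ₀)) := by
  obtain ⟨n, rfl⟩ : ∃ n, T = n + 1 := ⟨T - 1, by omega⟩
  have hm : 0 < lam / (1 - p) := div_pos hlam (by linarith)
  obtain ⟨κ, hκ, hw⟩ :=
    exists_pos_inv_covMat_mulVec_eq p n _ ψ₀ (abs_lt.2 ⟨by linarith, hp2⟩) hm hψ₀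
  have hzero : (⟨0, by omega⟩ : Fin (n + 1)) = 0 := rfl
  have hlast : (⟨n + 1 - 1, by omega⟩ : Fin (n + 1)) = Fin.last n := Fin.ext (by simp)
  have hpos : 0 < κ * (1 + p)⁻¹ := by positivity
  have hmiddle : ∀ j : Fin (n + 1), 1 ≤ (j : ℕ) → (j : ℕ) ≤ n + 1 - 2 →
      credibilityFactors p n κ j < credibilityFactors p n κ 0 := by
    intro j hj1 hj2
    rw [credibilityFactors_of_ne p n (by rw [Ne, Fin.ext_iff, Fin.val_zero]; omega)
      (by rw [Ne, Fin.ext_iff, Fin.val_last]; omega), credibilityFactors_zero p n (by omega)]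
    nlinarith
  rw [hw, hzero, hlast, credibilityFactors_zero p n (by omega),
    credibilityFactors_last p n (by omega)]
  refine ⟨?_, by linarith, hpos, fun hmono => ?_, fun i j hij => ?_⟩
  · simpa only [credibilityFactors_zero p n (by omega : 0 < n)] using hmiddle
  · have h01 := hmono 0 ⟨1, by omega⟩ (Fin.zero_le _)
    exact absurd h01 (not_le.2 (hmiddle ⟨1, by omega⟩ le_rfl (by simp; omega)))
  · have hexp : n + 1 - (j : ℕ) < n + 1 - i := by have := j.isLt; omega
    exact mul_lt_mul_of_pos_left
      (add_lt_add_left (pow_lt_pow_right_of_lt_one₀ hp1 hp2 hexp) _) hm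
end
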